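/- arXiv:2301.06446 — 2 statements merged into one kernel-verified Lean document; each statement's English description precedes it below -/
import Mathlib

section
/- Let m ≡ 1 (mod 6) with m ≥ 7, n = 2^m − 1, and v = 2^{(m+1)/2} − 1. Then gcd(v, n) = 1, and for every integer a with 1 ≤ a ≤ 2^{(m−1)/2} + 2, the binary weight of (a·v mod n) is congruent to 1 modulo 3. -/
/-!
Write `m = 2j + 1`, `k = j + 1`, `p = 2^j`, so `v = 2p - 1` and `n = 2p² - 1`.
For `1 ≤ a ≤ p` no reduction happens and `a·v = 2^k (a - 1) + (2^k - 1 - (a - 1))`: the two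
blocks of `k` bits are complementary, so the weight is exactly `k ≡ 1 (mod 3)`. The two remaining
values reduce to `(p + 1)·v ≡ p` and `(p + 2)·v ≡ 2^k + (p - 1)`, of weights `1` and `k`.
Coprimality is `gcd (2^k - 1) (2^m - 1) = 2^(gcd k m) - 1` with `gcd k (2k - 1) = 1`.
-/

def w2 (x : ℕ) : ℕ := (Nat.digits 2 x).sum

lemma w2_two_mul_add (y : ℕ) {b : ℕ} (hb : b < 2) : w2 (2 * y + b) = b + w2 y := by
  rcases Nat.eq_zero_or_pos (2 * y + b) with h | h
  · obtain ⟨rfl, rfl⟩ : y = 0 ∧ b = 0 := by omega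
    simp [w2]
  · rw [w2, Nat.digits_def' one_lt_two h, List.sum_cons, ← w2]
    congr 2 <;> omega

lemma w2_two_pow_mul_add {k r : ℕ} (x : ℕ) (hr : r < 2 ^ k) :
    w2 (2 ^ k * x + r) = w2 x + w2 r := by
  induction k generalizing r with
  | zero =>
    obtain rfl : r = 0 := by simpa using hr
    simp [w2]
  | succ k ih =>
    have hr2 : r % 2 < 2 := Nat.mod_lt _ two_pos
    have hr' : w2 r = r % 2 + w2 (r / 2) := by
      rw [← w2_two_mul_add _ hr2, Nat.div_add_mod]
    rw [show 2 ^ (k + 1) * x + r = 2 * (2 ^ k * x + r / 2) + r % 2 by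
      rw [pow_succ', mul_assoc]; omega,
      w2_two_mul_add _ hr2, ih (by rw [pow_succ'] at hr; omega), hr']
    omega

lemma w2_add_w2_two_pow_sub_one_sub {k s : ℕ} (hs : s < 2 ^ k) :
    w2 s + w2 (2 ^ k - 1 - s) = k := by
  induction k generalizing s with
  | zero =>
    obtain rfl : s = 0 := by simpa using hs
    simp [w2]
  | succ k ih =>
    rw [pow_succ'] at hs ⊢
    have hs2 : s % 2 < 2 := Nat.mod_lt _ two_pos
    have hs' : w2 s = s % 2 + w2 (s / 2) := by
      rw [← w2_two_mul_add _ hs2, Nat.div_add_mod]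
    rw [show 2 * 2 ^ k - 1 - s = 2 * (2 ^ k - 1 - s / 2) + (1 - s % 2) by omega,
      w2_two_mul_add _ (by omega), hs']
    have := ih (s := s / 2) (by omega)
    omega

lemma w2_two_pow (k : ℕ) : w2 (2 ^ k) = 1 := by
  simpa [w2] using w2_two_pow_mul_add (k := k) 1 (r := 0) (by positivity)

lemma w2_two_pow_sub_one (k : ℕ) : w2 (2 ^ k - 1) = k := by
  simpa [w2] using w2_add_w2_two_pow_sub_one_sub (k := k) (s := 0) (by positivity)

lemma w2_mul_two_pow_sub_one {k a : ℕ} (ha : 1 ≤ a) (hak : a ≤ 2 ^ k) :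
    w2 (a * (2 ^ k - 1)) = k := by
  have hsplit : a * (2 ^ k - 1) = 2 ^ k * (a - 1) + (2 ^ k - 1 - (a - 1)) := by
    obtain ⟨b, rfl⟩ : ∃ b, a = b + 1 := ⟨a - 1, by omega⟩
    rw [Nat.add_sub_cancel]
    zify [Nat.one_le_two_pow, show b ≤ 2 ^ k - 1 by omega]
    ring
  rw [hsplit, w2_two_pow_mul_add _ (by omega), w2_add_w2_two_pow_sub_one_sub (by omega)]

section
variable {p : ℕ}

lemma mul_two_mul_sub_one_lt {a : ℕ} (hp : 2 ≤ p) (ha : a ≤ p) :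
    a * (2 * p - 1) < 2 * p * p - 1 := by
  have h := Nat.mul_le_mul_right (2 * p - 1) ha
  zify [show 1 ≤ 2 * p by omega, show 1 ≤ 2 * p * p by nlinarith] at h ⊢
  nlinarith

lemma add_one_mul_two_mul_sub_one_mod (hp : 2 ≤ p) :
    (p + 1) * (2 * p - 1) % (2 * p * p - 1) = p := by
  have h : (p + 1) * (2 * p - 1) = (2 * p * p - 1) + p := by
    zify [show 1 ≤ 2 * p by omega, show 1 ≤ 2 * p * p by nlinarith]
    ring
  rw [h, Nat.add_mod_left, Nat.mod_eq_of_lt]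
  zify [show 1 ≤ 2 * p * p by nlinarith]
  nlinarith

lemma add_two_mul_two_mul_sub_one_mod (hp : 2 ≤ p) :
    (p + 2) * (2 * p - 1) % (2 * p * p - 1) = 2 * p + (p - 1) := by
  have h : (p + 2) * (2 * p - 1) = (2 * p * p - 1) + (2 * p + (p - 1)) := by
    zify [show 1 ≤ 2 * p by omega, show 1 ≤ 2 * p * p by nlinarith, show 1 ≤ p by omega]
    ring
  rw [h, Nat.add_mod_left, Nat.mod_eq_of_lt]
  zify [show 1 ≤ 2 * p * p by nlinarith, show 1 ≤ p by omega]
  nlinarith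

end

lemma w2_mul_mod_eq_succ_or_one {j a : ℕ} (hj : 1 ≤ j) (ha : 1 ≤ a) (ha' : a ≤ 2 ^ j + 2) :
    w2 (a * (2 ^ (j + 1) - 1) % (2 ^ (2 * j + 1) - 1)) = j + 1 ∨
      w2 (a * (2 ^ (j + 1) - 1) % (2 ^ (2 * j + 1) - 1)) = 1 := by
  have hp : 2 ≤ 2 ^ j := Nat.le_self_pow (by omega) 2
  rw [show 2 ^ (2 * j + 1) = 2 * 2 ^ j * 2 ^ j by ring, pow_succ']
  obtain ha | rfl | rfl : a ≤ 2 ^ j ∨ a = 2 ^ j + 1 ∨ a = 2 ^ j + 2 := by omega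
  · left
    rw [Nat.mod_eq_of_lt (mul_two_mul_sub_one_lt hp ha), ← pow_succ']
    exact w2_mul_two_pow_sub_one (by omega) (by rw [pow_succ']; omega)
  · right
    rw [add_one_mul_two_mul_sub_one_mod hp, w2_two_pow]
  · left
    rw [add_two_mul_two_mul_sub_one_mod hp, ← pow_succ', ← mul_one (2 ^ (j + 1)),
      w2_two_pow_mul_add _ (by rw [pow_succ']; omega), w2_two_pow_sub_one]
    simp [w2, add_comm]

theorem stmt4 (m : ℕ) (hm : m % 6 = 1) (hm7 : 7 ≤ m)
    (n v : ℕ) (hn : n = 2 ^ m - 1) (hv : v = 2 ^ ((m + 1) / 2) - 1) :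
    Nat.gcd v n = 1 ∧
    ∀ a : ℕ, 1 ≤ a → a ≤ 2 ^ ((m - 1) / 2) + 2 → w2 (a * v % n) % 3 = 1 := by
  obtain ⟨j, rfl⟩ : ∃ j, m = 2 * j + 1 := ⟨m / 2, by omega⟩
  rw [show (2 * j + 1 + 1) / 2 = j + 1 by omega] at hv
  rw [show (2 * j + 1 - 1) / 2 = j by omega]
  subst hn hv
  refine ⟨?_, fun a ha ha' => ?_⟩
  · rw [Nat.pow_sub_one_gcd_pow_sub_one, show Nat.gcd (j + 1) (2 * j + 1) = 1 by
      simp [show 2 * j + 1 = (j + 1) + j by ring]]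
    rfl
  · rcases w2_mul_mod_eq_succ_or_one (by omega) ha ha' with h | h <;> rw [h]; omega
end

section
/- Let m ≡ 2 (mod 4) with m ≥ 6, n = 2^m − 1, and v = 2^{(m−4)/2} − 1. Then gcd(v, n) = 1, and for every integer a with 1 ≤ a ≤ 2^{(m−4)/2}, the binary weight of a·v equals (m−4)/2. -/
/-!
Write `K = (m - 4) / 2`, so `v = 2 ^ K - 1` and `m = 2 K + 4` with `K` odd. Then
`gcd (2 ^ K - 1, 2 ^ m - 1) = 2 ^ gcd (K, m) - 1 = 1`. For `1 ≤ a ≤ 2 ^ K` we have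
`a (2 ^ K - 1) = (2 ^ K - a) + 2 ^ K (a - 1)`: the binary digits of `2 ^ K - a` and of `a - 1`
occupy disjoint blocks, and the first is the `K`-bit complement of the second, so the
weights add up to `K`.
-/

namespace Nat

variable {b : ℕ}

theorem digits_sum_add_base_pow_mul (hb : 1 < b) {k c : ℕ} (hc : c < b ^ k) (d : ℕ) :
    (digits b (c + b ^ k * d)).sum = (digits b c).sum + (digits b d).sum := by
  rcases Nat.eq_zero_or_pos d with rfl | hd
  · simp
  have hlen : (digits b c).length ≤ k := (digits_length_le_iff hb c).mpr hc
  have hsplit := digits_append_zeroes_append_digits (n := c) (k := k - (digits b c).length) hb hd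
  rw [Nat.add_sub_cancel' hlen] at hsplit
  simp [← hsplit]

theorem digits_sum_add_digits_sum_base_pow_sub_one_sub (hb : 1 < b) {k c : ℕ} (hc : c < b ^ k) :
    (digits b c).sum + (digits b (b ^ k - 1 - c)).sum = k * (b - 1) := by
  induction k generalizing c with
  | zero =>
    obtain rfl : c = 0 := by simpa using hc
    simp
  | succ k ih =>
    have hdigit (r q : ℕ) (hr : r < b) : (digits b (r + b * q)).sum = r + (digits b q).sum := by
      by_cases h : r = 0 ∧ q = 0
      · simp [h]
      · rw [digits_add b hb r q hr (by tauto), List.sum_cons]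
    obtain ⟨r, q, hr, rfl⟩ : ∃ r q, r < b ∧ c = r + b * q :=
      ⟨c % b, c / b, mod_lt c (by omega), (mod_add_div c b).symm⟩
    rw [pow_succ'] at hc ⊢
    have hq : q < b ^ k := Nat.lt_of_mul_lt_mul_left (a := b) (by omega)
    have hcompl : b * b ^ k - 1 - (r + b * q) = (b - 1 - r) + b * (b ^ k - 1 - q) := by
      have : b * q + b ≤ b * b ^ k := by simpa [mul_add] using Nat.mul_le_mul_left b hq
      rw [Nat.mul_sub, Nat.mul_sub, mul_one]
      omega
    rw [hcompl, hdigit r q hr, hdigit _ _ (by omega), add_mul, one_mul, ← ih hq]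
    omega

theorem succ_mul_sub_one_eq {B c : ℕ} (hc : c < B) : (c + 1) * (B - 1) = (B - 1 - c) + B * c := by
  have : c ≤ B * c := Nat.le_mul_of_pos_left c (by omega)
  rw [add_mul, one_mul, Nat.mul_sub, mul_one, mul_comm c B]
  omega

theorem digits_sum_mul_base_pow_sub_one (hb : 1 < b) {k a : ℕ} (ha₀ : 1 ≤ a) (ha : a ≤ b ^ k) :
    (digits b (a * (b ^ k - 1))).sum = k * (b - 1) := by
  obtain ⟨c, rfl⟩ : ∃ c, a = c + 1 := ⟨a - 1, by omega⟩
  have hc : c < b ^ k := by omega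
  rw [succ_mul_sub_one_eq hc, digits_sum_add_base_pow_mul hb (by omega), add_comm,
    digits_sum_add_digits_sum_base_pow_sub_one_sub hb hc]

end Nat

theorem Odd.coprime_two_mul_add_four {K : ℕ} (hK : Odd K) : Nat.Coprime K (2 * K + 4) := by
  rw [show 2 * K + 4 = 2 ^ 2 + K * 2 by ring, Nat.coprime_add_mul_left_right]
  exact (Nat.coprime_two_right.mpr hK).pow_right 2

theorem stmt9 (m : ℕ) (hm : m % 4 = 2) (hm6 : 6 ≤ m)
    (n v : ℕ) (hn : n = 2 ^ m - 1) (hv : v = 2 ^ ((m - 4) / 2) - 1) :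
    Nat.gcd v n = 1 ∧
    ∀ a : ℕ, 1 ≤ a → a ≤ 2 ^ ((m - 4) / 2) → w2 (a * v) = (m - 4) / 2 := by
  set K := (m - 4) / 2
  have hmK : m = 2 * K + 4 := by omega
  have hK : Odd K := Nat.odd_iff.mpr (by omega)
  subst hn hv
  refine ⟨?_, fun a ha₀ ha => ?_⟩
  · rw [Nat.pow_sub_one_gcd_pow_sub_one, hmK, hK.coprime_two_mul_add_four.gcd_eq_one, pow_one]
  · simpa [w2] using Nat.digits_sum_mul_base_pow_sub_one one_lt_two ha₀ ha
end
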